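/- arXiv:2412.17899 — 2 statements merged into one kernel-verified Lean document; each statement's English description precedes it below -/
import Mathlib

section
/- Suppose for each x ∈ ℝⁿ and each measurable A ⊆ ℝⁿ, P_x(A) denotes the Gibbs transition probability: P_x(A) = (1/n)·Σⱼ Π(A ∩ ℓⱼ(x) | x_{-j}), where ℓⱼ(x) is the line through x parallel to eⱼ and the conditional distribution along ℓⱼ(x) is that of π conditioned on all coordinates except j. Let A₁ ∪ A₂ be a partition of ℝⁿ, and define A₁' = {x ∈ A₁ : P_x(A₂) < 1/(2n)} and A₂' = {x ∈ A₂ : P_x(A₁) < 1/(2n)}. Then A₁' and A₂' are axis-disjoint. -/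
/-- For the Gibbs sampler, the sets `A₁' = {x ∈ A₁ : P_x(A₂) < 1/(2n)}` and
`A₂' = {x ∈ A₂ : P_x(A₁) < 1/(2n)}` are axis-disjoint.  Here `Q j x` is the
conditional probability along the line through `x` parallel to `e j`
(it depends only on `x_{-j}`), and `P x A = (1/n) ∑ j, Q j x (A ∩ ℓ_j(x))`. -/
theorem stmt_9 {n : ℕ} (hn : 1 ≤ n)
    (Q : Fin n → (Fin n → ℝ) → Set (Fin n → ℝ) → ℝ)
    (line : Fin n → (Fin n → ℝ) → Set (Fin n → ℝ))
    (hline : ∀ j x, line j x = {y : Fin n → ℝ | ∀ i : Fin n, i ≠ j → y i = x i})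
    (hQ_nonneg : ∀ j x A, 0 ≤ Q j x A)
    (hQ_prob : ∀ j x, Q j x (line j x) = 1)
    (hQ_add : ∀ j x A B, Disjoint A B → Q j x (A ∪ B) = Q j x A + Q j x B)
    (hQ_dep : ∀ j x y, (∀ i : Fin n, i ≠ j → x i = y i) → Q j x = Q j y)
    (P : (Fin n → ℝ) → Set (Fin n → ℝ) → ℝ)
    (hP : ∀ x A, P x A = (1 / (n : ℝ)) * ∑ j : Fin n, Q j x (A ∩ line j x))
    (A₁ A₂ : Set (Fin n → ℝ)) (hunion : A₁ ∪ A₂ = Set.univ)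
    (hdisj : Disjoint A₁ A₂)
    (A₁' A₂' : Set (Fin n → ℝ))
    (hA₁' : A₁' = {x ∈ A₁ | P x A₂ < 1 / (2 * n)})
    (hA₂' : A₂' = {x ∈ A₂ | P x A₁ < 1 / (2 * n)}) :
    ∀ x ∈ A₁', ∀ y ∈ A₂',
      2 ≤ (Finset.univ.filter (fun i : Fin n => x i ≠ y i)).card := by
  intro x hx y hy
  rw [hA₁'] at hx; rw [hA₂'] at hy
  obtain ⟨hxA, hxP⟩ := hx
  obtain ⟨hyA, hyP⟩ := hy
  by_contra hlt
  push_neg at hlt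
  interval_cases h : (Finset.univ.filter (fun i : Fin n => x i ≠ y i)).card
  · -- x = y
    have hxy : x = y := by
      funext i
      by_contra hne
      have : i ∈ Finset.univ.filter (fun i : Fin n => x i ≠ y i) := by
        simp [hne]
      rw [Finset.card_eq_zero.mp h] at this
      exact absurd this (Finset.notMem_empty i)
    exact Set.disjoint_left.mp hdisj hxA (hxy ▸ hyA)
  · obtain ⟨j, hj⟩ := Finset.card_eq_one.mp h
    have heq : ∀ i : Fin n, i ≠ j → x i = y i := by
      intro i hij
      by_contra hne
      have : i ∈ Finset.univ.filter (fun i : Fin n => x i ≠ y i) := by simp [hne]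
      rw [hj, Finset.mem_singleton] at this
      exact hij this
    have hlineeq : line j y = line j x := by
      rw [hline, hline]
      ext z
      constructor <;> intro hz i hi
      · rw [hz i hi, ← heq i hi]
      · rw [hz i hi, heq i hi]
    have hQeq : Q j y = Q j x := hQ_dep j y x (fun i hi => (heq i hi).symm)
    set L := line j x with hL
    have hdisjL : Disjoint (A₁ ∩ L) (A₂ ∩ L) :=
      hdisj.mono Set.inter_subset_left Set.inter_subset_left
    have hcover : (A₁ ∩ L) ∪ (A₂ ∩ L) = L := by
      rw [← Set.union_inter_distrib_right, hunion, Set.univ_inter]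
    have hone : Q j x (A₁ ∩ L) + Q j x (A₂ ∩ L) = 1 := by
      rw [← hQ_add j x _ _ hdisjL, hcover, hQ_prob]
    have hnpos : (0:ℝ) < n := by exact_mod_cast hn
    have hb1 : (1 / (n:ℝ)) * Q j x (A₂ ∩ L) ≤ P x A₂ := by
      rw [hP]
      apply mul_le_mul_of_nonneg_left _ (by positivity)
      exact Finset.single_le_sum (f := fun i => Q i x (A₂ ∩ line i x)) (fun i _ => hQ_nonneg i x _) (Finset.mem_univ j)
    have hb2 : (1 / (n:ℝ)) * Q j x (A₁ ∩ L) ≤ P y A₁ := by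
      rw [hP]
      apply mul_le_mul_of_nonneg_left _ (by positivity)
      have : Q j y (A₁ ∩ line j y) = Q j x (A₁ ∩ L) := by rw [hQeq, hlineeq]
      rw [← this]
      exact Finset.single_le_sum (f := fun i => Q i y (A₁ ∩ line i y)) (fun i _ => hQ_nonneg i y _) (Finset.mem_univ j)
    have hsum : (1 / (n:ℝ)) ≤ P x A₂ + P y A₁ := by
      have := add_le_add hb1 hb2
      rw [← mul_add] at this
      rw [add_comm] at hone
      rw [hone, mul_one] at this
      exact this
    have : P x A₂ + P y A₁ < 1 / (n:ℝ) := by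
      have hne : (n:ℝ) ≠ 0 := ne_of_gt hnpos
      have : (1:ℝ) / (2 * n) + 1 / (2 * n) = 1 / n := by field_simp; norm_num
      linarith
    linarith
end

section
/- Let C ⊆ ℝⁿ be a measurable set, π a density with max on C attained at w, and assume exp(-ν) ≤ π(x)/π(w) ≤ 1 for all x ∈ C, where 0 ≤ ν < log(4/3). Suppose for all axis-disjoint subsets S₁, S₂ of C with vol(S₁) ≤ (2/3)vol(C) one has vol(C \ (S₁ ∪ S₂)) ≥ (ψ/4)·vol(S₁) for some ψ > 0 (the uniform cube isoperimetry). Then for axis-disjoint S₁, S₂ ⊆ C with Π(S₁) ≤ (2/3)·exp(-ν)·Π(C), one has Π(C \ (S₁ ∪ S₂)) ≥ (ψ/4)·exp(-ν)·Π(S₁). -/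
/-!
On `C` the density is pinched between `exp(-ν)·π(w)` and `π(w)`, so for subsets of `C` the mass
`Π` agrees with `π(w)·vol` up to a factor `exp(-ν)`. Hence the mass bound on `S₁` yields the volume
bound `vol S₁ ≤ (2/3)·vol C` required by the cube isoperimetry, whose conclusion transfers back to
`Π` at the cost of one more factor `exp(-ν)`.
-/

open MeasureTheory Set

section PinchedDensity

variable {α : Type*} [MeasurableSpace α] {μ : Measure α} {f : α → ℝ} {C s : Set α} {m M : ℝ}

theorem integrableOn_of_forall_mem_Icc (hf : AEStronglyMeasurable f μ) (hC : MeasurableSet C)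
    (hμC : μ C ≠ ⊤) (hfC : ∀ x ∈ C, f x ∈ Icc m M) : IntegrableOn f C μ :=
  Measure.integrableOn_of_bounded (M := max |m| |M|) hμC hf <|
    ae_restrict_of_forall_mem hC fun x hx => abs_le_max_abs_abs (hfC x hx).1 (hfC x hx).2

theorem mul_measureReal_le_setIntegral_of_subset (hf : AEStronglyMeasurable f μ)
    (hC : MeasurableSet C) (hμC : μ C ≠ ⊤) (hfC : ∀ x ∈ C, f x ∈ Icc m M)
    (hsC : s ⊆ C) (hs : MeasurableSet s) :
    m * μ.real s ≤ ∫ x in s, f x ∂μ :=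
  setIntegral_ge_of_const_le_real hs (measure_ne_top_of_subset hsC hμC)
    (fun x hx => (hfC x (hsC hx)).1) ((integrableOn_of_forall_mem_Icc hf hC hμC hfC).mono_set hsC)

theorem setIntegral_le_mul_measureReal_of_subset (hf : AEStronglyMeasurable f μ)
    (hC : MeasurableSet C) (hμC : μ C ≠ ⊤) (hfC : ∀ x ∈ C, f x ∈ Icc m M)
    (hsC : s ⊆ C) (hs : MeasurableSet s) :
    ∫ x in s, f x ∂μ ≤ M * μ.real s := by
  simpa [mul_comm] using setIntegral_mono_on
    ((integrableOn_of_forall_mem_Icc hf hC hμC hfC).mono_set hsC)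
    (integrableOn_const (measure_ne_top_of_subset hsC hμC)) hs fun x hx => (hfC x (hsC hx)).2

theorem measureReal_le_of_setIntegral_le {c κ : ℝ} (hf : AEStronglyMeasurable f μ)
    (hC : MeasurableSet C) (hμC : μ C ≠ ⊤) (hfC : ∀ x ∈ C, f x ∈ Icc (c * M) M)
    (hsC : s ⊆ C) (hs : MeasurableSet s) (hc : 0 < c) (hM : 0 < M) (hκ : 0 ≤ κ)
    (hmass : ∫ x in s, f x ∂μ ≤ κ * c * ∫ x in C, f x ∂μ) :
    μ.real s ≤ κ * μ.real C := by
  refine le_of_mul_le_mul_left ?_ (mul_pos hc hM)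
  calc c * M * μ.real s ≤ ∫ x in s, f x ∂μ :=
        mul_measureReal_le_setIntegral_of_subset hf hC hμC hfC hsC hs
    _ ≤ κ * c * ∫ x in C, f x ∂μ := hmass
    _ ≤ κ * c * (M * μ.real C) := by
        gcongr; exact setIntegral_le_mul_measureReal_of_subset hf hC hμC hfC le_rfl hC
    _ = c * M * (κ * μ.real C) := by ring

end PinchedDensity

theorem stmt_16_general {n : ℕ} (π : EuclideanSpace ℝ (Fin n) → ℝ)
    (hπ_meas : Measurable π) (hπ_nonneg : ∀ x, 0 ≤ π x)
    (C : Set (EuclideanSpace ℝ (Fin n))) (hC : MeasurableSet C)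
    (hC_fin : volume C ≠ ⊤)
    (w : EuclideanSpace ℝ (Fin n))
    (hmax : ∀ x ∈ C, π x ≤ π w)
    (ν : ℝ)
    (hratio : ∀ x ∈ C, Real.exp (-ν) * π w ≤ π x)
    (ψ : ℝ) (hψ : 0 < ψ)
    (hcube : ∀ T₁ T₂ : Set (EuclideanSpace ℝ (Fin n)),
      MeasurableSet T₁ → MeasurableSet T₂ → T₁ ⊆ C → T₂ ⊆ C →
      (∀ x ∈ T₁, ∀ y ∈ T₂,
        2 ≤ (Finset.univ.filter (fun i : Fin n => x i ≠ y i)).card) →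
      (volume T₁).toReal ≤ 2 / 3 * (volume C).toReal →
      ψ / 4 * (volume T₁).toReal ≤ (volume (C \ (T₁ ∪ T₂))).toReal)
    (S₁ S₂ : Set (EuclideanSpace ℝ (Fin n)))
    (hS₁ : MeasurableSet S₁) (hS₂ : MeasurableSet S₂)
    (hS₁C : S₁ ⊆ C) (hS₂C : S₂ ⊆ C)
    (haxis : ∀ x ∈ S₁, ∀ y ∈ S₂,
      2 ≤ (Finset.univ.filter (fun i : Fin n => x i ≠ y i)).card)
    (hsmall : (∫ x in S₁, π x) ≤ 2 / 3 * Real.exp (-ν) * ∫ x in C, π x) :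
    ψ / 4 * Real.exp (-ν) * (∫ x in S₁, π x) ≤
      ∫ x in C \ (S₁ ∪ S₂), π x := by
  set e := Real.exp (-ν)
  have hπC : ∀ x ∈ C, π x ∈ Icc (e * π w) (π w) := fun x hx => ⟨hratio x hx, hmax x hx⟩
  have hD : MeasurableSet (C \ (S₁ ∪ S₂)) := hC.diff (hS₁.union hS₂)
  have hmassS₁ : ∫ x in S₁, π x ≤ π w * volume.real S₁ :=
    setIntegral_le_mul_measureReal_of_subset hπ_meas.aestronglyMeasurable hC hC_fin hπC hS₁C hS₁
  have hmassD : e * π w * volume.real (C \ (S₁ ∪ S₂)) ≤ ∫ x in C \ (S₁ ∪ S₂), π x :=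
    mul_measureReal_le_setIntegral_of_subset hπ_meas.aestronglyMeasurable hC hC_fin hπC
      sdiff_subset hD
  rcases (hπ_nonneg w).eq_or_lt with hw0 | hw0
  · have hS₁_nonpos : ∫ x in S₁, π x ≤ 0 := by simpa [← hw0] using hmassS₁
    have hD_nonneg : 0 ≤ ∫ x in C \ (S₁ ∪ S₂), π x := by simpa [← hw0] using hmassD
    exact (mul_nonpos_of_nonneg_of_nonpos (by positivity) hS₁_nonpos).trans hD_nonneg
  have hvol : volume.real S₁ ≤ 2 / 3 * volume.real C :=
    measureReal_le_of_setIntegral_le hπ_meas.aestronglyMeasurable hC hC_fin hπC hS₁C hS₁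
      (Real.exp_pos _) hw0 (by norm_num) hsmall
  calc ψ / 4 * e * ∫ x in S₁, π x ≤ ψ / 4 * e * (π w * volume.real S₁) := by gcongr
    _ = e * π w * (ψ / 4 * volume.real S₁) := by ring
    _ ≤ e * π w * volume.real (C \ (S₁ ∪ S₂)) := by
        gcongr; exact hcube S₁ S₂ hS₁ hS₂ hS₁C hS₂C haxis hvol
    _ ≤ ∫ x in C \ (S₁ ∪ S₂), π x := hmassD

/-- Transfer of the uniform cube isoperimetric inequality to an approximately
uniform log-concave density: if `exp(-ν) ≤ π(x)/π(w) ≤ 1` on `C` with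
`0 ≤ ν < log(4/3)` and the volume isoperimetry holds with constant `ψ/4`, then
for axis-disjoint `S₁, S₂ ⊆ C` with `Π(S₁) ≤ (2/3)·exp(-ν)·Π(C)` we get
`Π(C \ (S₁ ∪ S₂)) ≥ (ψ/4)·exp(-ν)·Π(S₁)`. -/
theorem stmt_16 {n : ℕ} (π : EuclideanSpace ℝ (Fin n) → ℝ)
    (hπ_meas : Measurable π) (hπ_nonneg : ∀ x, 0 ≤ π x)
    (C : Set (EuclideanSpace ℝ (Fin n))) (hC : MeasurableSet C)
    (hC_fin : volume C ≠ ⊤) (hC_pos : 0 < volume C)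
    (w : EuclideanSpace ℝ (Fin n)) (hw : w ∈ C)
    (hmax : ∀ x ∈ C, π x ≤ π w)
    (ν : ℝ) (hν0 : 0 ≤ ν) (hν1 : ν < Real.log (4 / 3))
    (hratio : ∀ x ∈ C, Real.exp (-ν) * π w ≤ π x)
    (ψ : ℝ) (hψ : 0 < ψ)
    (hcube : ∀ T₁ T₂ : Set (EuclideanSpace ℝ (Fin n)),
      MeasurableSet T₁ → MeasurableSet T₂ → T₁ ⊆ C → T₂ ⊆ C →
      (∀ x ∈ T₁, ∀ y ∈ T₂,
        2 ≤ (Finset.univ.filter (fun i : Fin n => x i ≠ y i)).card) →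
      (volume T₁).toReal ≤ 2 / 3 * (volume C).toReal →
      ψ / 4 * (volume T₁).toReal ≤ (volume (C \ (T₁ ∪ T₂))).toReal)
    (S₁ S₂ : Set (EuclideanSpace ℝ (Fin n)))
    (hS₁ : MeasurableSet S₁) (hS₂ : MeasurableSet S₂)
    (hS₁C : S₁ ⊆ C) (hS₂C : S₂ ⊆ C)
    (haxis : ∀ x ∈ S₁, ∀ y ∈ S₂,
      2 ≤ (Finset.univ.filter (fun i : Fin n => x i ≠ y i)).card)
    (hsmall : (∫ x in S₁, π x) ≤ 2 / 3 * Real.exp (-ν) * ∫ x in C, π x) :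
    ψ / 4 * Real.exp (-ν) * (∫ x in S₁, π x) ≤
      ∫ x in C \ (S₁ ∪ S₂), π x :=
  stmt_16_general π hπ_meas hπ_nonneg C hC hC_fin w hmax ν hratio ψ hψ hcube S₁ S₂ hS₁ hS₂ hS₁C hS₂C
    haxis hsmall
end
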